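/- When t = 0, the quartic polynomial f factors as f(y) = (1+p)²·m1·m2·(y² − m1·m2)·(m1 + m2 − (1−p)y); in particular, the only root of f in (0, m1+m2) belonging to the interval (0, (m1+m2)/2] is y = √(m1·m2). -/
import Mathlib


/-- The quartic polynomial `f` whose root gives the sum `y = x1 + x2`
at a non-extreme equilibrium. -/
noncomputable def f (m1 m2 t p y : ℝ) : ℝ :=
  (1-p)^2*t*y^4
  - (1-p)*(4*t^2 + 4*(m1+m2)*t + (1+p)^2*m1*m2)*y^3
  + (4*t^3 + 8*(m1+m2)*t^2
      + (4*m1^2 + 4*m2^2 + 11*m1*m2 + 3*p^2*m1*m2 - 2*p*m1*m2)*t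
      + (1+p)^2*m1*m2*(m1+m2))*y^2
  + (1-p)*m1*m2*((1+p)^2*m1*m2 - 4*(m1+m2)*t - 4*t^2)*y
  - m1^2*m2^2*((1+p)^2*(m1+m2) + 4*p*t)

/-- Factorization of `f` when `t = 0`, and the unique root in
`(0, m1+m2) ∩ (0, (m1+m2)/2]` is `√(m1 m2)`. -/
theorem stmt14 (m1 m2 p : ℝ) (hm1 : 0 < m1) (hm2 : 0 < m2)
    (hp0 : 0 ≤ p) (hp1 : p < 1) :
    (∀ y : ℝ, f m1 m2 0 p y =
      (1+p)^2*m1*m2*(y^2 - m1*m2)*(m1 + m2 - (1-p)*y)) ∧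
    (∀ y : ℝ, (y ∈ Set.Ioo 0 (m1+m2) ∧ y ≤ (m1+m2)/2 ∧ f m1 m2 0 p y = 0) ↔
      y = Real.sqrt (m1*m2)) := by
  have hfac : ∀ y : ℝ, f m1 m2 0 p y =
      (1+p)^2*m1*m2*(y^2 - m1*m2)*(m1 + m2 - (1-p)*y) := by
    intro y; unfold f; ring
  have hmm : 0 < m1 * m2 := mul_pos hm1 hm2
  have hs : Real.sqrt (m1*m2) ^ 2 = m1 * m2 := Real.sq_sqrt hmm.le
  have hsnn : 0 ≤ Real.sqrt (m1*m2) := Real.sqrt_nonneg _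
  have hshalf : Real.sqrt (m1*m2) ≤ (m1+m2)/2 := by
    nlinarith [sq_nonneg (m1 - m2), sq_nonneg (Real.sqrt (m1*m2) - (m1+m2)/2)]
  refine ⟨hfac, fun y => ⟨?_, ?_⟩⟩
  · rintro ⟨⟨hy0, hyub⟩, hyhalf, hf⟩
    rw [hfac y] at hf
    have hpos : 0 < m1 + m2 - (1-p)*y := by nlinarith
    have h1p : (0:ℝ) < (1+p)^2 := by positivity
    have : y^2 - m1*m2 = 0 := by
      rcases mul_eq_zero.mp hf with h | h
      · rcases mul_eq_zero.mp h with h | h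
        · nlinarith
        · exact h
      · nlinarith
    have hy2 : y^2 = m1*m2 := by linarith
    nlinarith [sq_nonneg (y - Real.sqrt (m1*m2))]
  · rintro rfl
    have hpos : 0 < Real.sqrt (m1*m2) := Real.sqrt_pos.mpr hmm
    refine ⟨⟨hpos, by linarith⟩, hshalf, ?_⟩
    rw [hfac, hs]
    ring
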